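/- arXiv:2509.14503 — 2 statements merged into one kernel-verified Lean document; each statement's English description precedes it below -/
import Mathlib

section
/- Fix a signal h* ∈ ℝ^S with h*_i = 0 for all i ∈ Λ and support S := supp(h*), and a noise vector n ∈ ℝ^M with ‖n‖₁ ≤ σ. If the thresholds satisfy θ^l ≥ μ2·‖h^l − h*‖₁ + C_P·σ for every l ≥ 0, then the LISTA-AGE iterates satisfy h^l_i = 0 for every index i ∉ S and every l ≥ 0. -/
open Finset

noncomputable def softThresh (θ x : ℝ) : ℝ := Real.sign x * max (|x| - θ) 0

noncomputable def listaAge {M S : ℕ} (P : Matrix (Fin M) (Fin S) ℝ)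
    (Λ : Finset (Fin S)) (θ : ℕ → ℝ) (y : Fin M → ℝ) : ℕ → Fin S → ℝ
  | 0 => fun _ => 0
  | l + 1 => fun i =>
      if i ∈ Λ then 0
      else softThresh (θ l)
        (listaAge P Λ θ y l i -
          ∑ m, P m i * ((∑ j, P m j * listaAge P Λ θ y l j) - y m))

noncomputable def l1norm {k : ℕ} (v : Fin k → ℝ) : ℝ := ∑ i, |v i|

noncomputable def l2norm {k : ℕ} (v : Fin k → ℝ) : ℝ := Real.sqrt (∑ i, (v i) ^ 2)

noncomputable def supp {k : ℕ} (v : Fin k → ℝ) : Finset (Fin k) :=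
  Finset.univ.filter (fun i => v i ≠ 0)

lemma softThresh_eq_zero {θ x : ℝ} (h : |x| ≤ θ) : softThresh θ x = 0 := by
  unfold softThresh
  rw [max_eq_right (by linarith)]
  ring

/-- Lemma 1: under the threshold condition, the LISTA-AGE iterates
vanish outside the support of the true signal. -/
theorem lista_age_no_false_positive {M S : ℕ} (P : Matrix (Fin M) (Fin S) ℝ)
    (hcol : ∀ i, ∑ m, P m i * P m i = 1)
    (Λ : Finset (Fin S)) (CP μ2 σ : ℝ) (hσ : 0 ≤ σ)
    (hCP : ∀ i j, |P i j| ≤ CP)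
    (hμ2 : ∀ i j, i ≠ j → i ∉ Λ → |∑ m, P m i * P m j| ≤ μ2)
    (hstar : Fin S → ℝ) (n : Fin M → ℝ)
    (hΛ : ∀ i ∈ Λ, hstar i = 0)
    (hn : l1norm n ≤ σ)
    (θ : ℕ → ℝ) (hθ0 : ∀ l, 0 ≤ θ l)
    (hθ : ∀ l, μ2 * l1norm (fun i =>
        listaAge P Λ θ (fun m => (∑ j, P m j * hstar j) + n m) l i - hstar i)
        + CP * σ ≤ θ l) :
    ∀ l : ℕ, ∀ i : Fin S, hstar i = 0 →
      listaAge P Λ θ (fun m => (∑ j, P m j * hstar j) + n m) l i = 0 := by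
  set y : Fin M → ℝ := fun m => (∑ j, P m j * hstar j) + n m with hy
  intro l
  induction l with
  | zero => intro i _; rfl
  | succ l IH =>
    intro i hi
    show (if i ∈ Λ then 0 else softThresh (θ l)
        (listaAge P Λ θ y l i -
          ∑ m, P m i * ((∑ j, P m j * listaAge P Λ θ y l j) - y m))) = 0
    by_cases hiΛ : i ∈ Λ
    · simp [hiΛ]
    rw [if_neg hiΛ]
    set h : Fin S → ℝ := listaAge P Λ θ y l with hh
    have hhi : h i = 0 := IH i hi
    apply softThresh_eq_zero
    have key : (∑ m, P m i * ((∑ j, P m j * h j) - y m))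
        = (∑ j, (∑ m, P m i * P m j) * (h j - hstar j)) - ∑ m, P m i * n m := by
      have step : ∀ m, P m i * ((∑ j, P m j * h j) - y m)
          = (∑ j, P m i * P m j * (h j - hstar j)) - P m i * n m := by
        intro m
        have : (∑ j, P m i * P m j * (h j - hstar j))
            = P m i * (∑ j, P m j * h j) - P m i * (∑ j, P m j * hstar j) := by
          rw [← mul_sub, ← Finset.sum_sub_distrib, Finset.mul_sum]
          congr 1
          funext j
          ring
        rw [this]
        simp only [hy]
        ring
      simp only [step, Finset.sum_sub_distrib]
      congr 1
      rw [Finset.sum_comm]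
      apply Finset.sum_congr rfl
      intro j _
      rw [Finset.sum_mul]
    rw [key, hhi]
    rcases Nat.eq_zero_or_pos M with hM | hM
    · subst hM
      simp only [Finset.univ_eq_empty, Finset.sum_empty, zero_mul,
        Finset.sum_const_zero, sub_zero, zero_sub, abs_neg, abs_zero]
      exact hθ0 l
    have hCP0 : 0 ≤ CP := le_trans (abs_nonneg _) (hCP ⟨0, hM⟩ i)
    have hdi : h i - hstar i = 0 := by rw [hhi, hi]; ring
    have bd1 : |∑ j, (∑ m, P m i * P m j) * (h j - hstar j)|
        ≤ μ2 * l1norm (fun j => h j - hstar j) := by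
      calc |∑ j, (∑ m, P m i * P m j) * (h j - hstar j)|
          ≤ ∑ j, |(∑ m, P m i * P m j) * (h j - hstar j)| :=
            Finset.abs_sum_le_sum_abs _ _
        _ ≤ ∑ j, μ2 * |h j - hstar j| := by
            apply Finset.sum_le_sum
            intro j _
            rw [abs_mul]
            by_cases hji : j = i
            · subst hji; rw [hdi]; simp
            · exact mul_le_mul_of_nonneg_right
                (hμ2 i j (Ne.symm hji) hiΛ) (abs_nonneg _)
        _ = μ2 * l1norm (fun j => h j - hstar j) := by
            rw [l1norm, Finset.mul_sum]
    have bd2 : |∑ m, P m i * n m| ≤ CP * σ := by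
      calc |∑ m, P m i * n m| ≤ ∑ m, |P m i * n m| :=
            Finset.abs_sum_le_sum_abs _ _
        _ ≤ ∑ m, CP * |n m| := by
            apply Finset.sum_le_sum
            intro m _
            rw [abs_mul]
            exact mul_le_mul_of_nonneg_right (hCP m i) (abs_nonneg _)
        _ = CP * l1norm n := by rw [l1norm, Finset.mul_sum]
        _ ≤ CP * σ := mul_le_mul_of_nonneg_left hn hCP0
    calc |0 - ((∑ j, (∑ m, P m i * P m j) * (h j - hstar j)) - ∑ m, P m i * n m)|
        ≤ |∑ j, (∑ m, P m i * P m j) * (h j - hstar j)| + |∑ m, P m i * n m| := by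
          rw [zero_sub, abs_neg]
          exact abs_sub _ _
      _ ≤ μ2 * l1norm (fun j => h j - hstar j) + CP * σ := add_le_add bd1 bd2
      _ ≤ θ l := hθ l
end

section
/- Suppose the current LISTA-AGE iterate satisfies h^l_j = 0 for all j ∉ S, where S := supp(h*). Then for every i ∈ S, the next iterate satisfies |h^{l+1}_i − h*_i| ≤ μ1·Σ_{j∈S, j≠i}|h^l_j − h*_j| + θ^l + C_P·‖n‖₁. -/
open Finset

lemma soft_close (θ x : ℝ) (hθ : 0 ≤ θ) : |softThresh θ x - x| ≤ θ := by
  unfold softThresh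
  rcases lt_trichotomy x 0 with h|h|h
  · rw [Real.sign_of_neg h, abs_of_neg h]
    rcases le_or_gt (-x - θ) 0 with h2|h2
    · rw [max_eq_right h2, abs_of_nonneg (by linarith : (0:ℝ) ≤ -1*0 - x)]; linarith
    · rw [max_eq_left h2.le, abs_of_nonneg (by linarith : (0:ℝ) ≤ -1*(-x-θ) - x)]; linarith
  · simp [h]; exact hθ
  · rw [Real.sign_of_pos h, abs_of_pos h]
    rcases le_or_gt (x - θ) 0 with h2|h2
    · rw [max_eq_right h2, abs_of_nonpos (by linarith : 1*0 - x ≤ 0)]; linarith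
    · rw [max_eq_left h2.le, abs_of_nonpos (by linarith : 1*(x-θ) - x ≤ 0)]; linarith

/-- on-support per-coordinate error bound for one LISTA-AGE layer. -/
theorem lista_age_on_support_step {M S : ℕ} (P : Matrix (Fin M) (Fin S) ℝ)
    (hcol : ∀ i, ∑ m, P m i * P m i = 1)
    (Λ : Finset (Fin S)) (CP μ1 : ℝ)
    (hCP : ∀ i j, |P i j| ≤ CP)
    (hμ1 : ∀ i j, i ≠ j → |∑ m, P m i * P m j| ≤ μ1)
    (hstar : Fin S → ℝ) (n : Fin M → ℝ)
    (hΛ : ∀ i ∈ Λ, hstar i = 0)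
    (θ : ℕ → ℝ) (hθ0 : ∀ l, 0 ≤ θ l)
    (l : ℕ)
    (hvanish : ∀ j : Fin S, hstar j = 0 →
      listaAge P Λ θ (fun m => (∑ j, P m j * hstar j) + n m) l j = 0)
    (i : Fin S) (hi : hstar i ≠ 0) :
    |listaAge P Λ θ (fun m => (∑ j, P m j * hstar j) + n m) (l + 1) i - hstar i|
      ≤ μ1 * (∑ j ∈ (supp hstar).erase i,
            |listaAge P Λ θ (fun m => (∑ j, P m j * hstar j) + n m) l j - hstar j|)
        + θ l + CP * l1norm n := by
  set y : Fin M → ℝ := fun m => (∑ j, P m j * hstar j) + n m with hy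
  set h : Fin S → ℝ := listaAge P Λ θ y l with hh
  have hiΛ : i ∉ Λ := fun hmem => hi (hΛ i hmem)
  set x : ℝ := h i - ∑ m, P m i * ((∑ j, P m j * h j) - y m) with hx
  have hstep : listaAge P Λ θ y (l+1) i = softThresh (θ l) x := by
    rw [listaAge]
    simp [hiΛ, hx, hh]
  -- algebraic identity
  have key : x - hstar i
      = -(∑ j ∈ Finset.univ.erase i, (∑ m, P m i * P m j) * (h j - hstar j))
        + ∑ m, P m i * n m := by
    have e1 : ∑ m, P m i * ((∑ j, P m j * h j) - y m)
        = ∑ m, P m i * (∑ j, P m j * (h j - hstar j)) - ∑ m, P m i * n m := by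
      rw [← Finset.sum_sub_distrib]
      refine Finset.sum_congr rfl fun m _ => ?_
      have e2 : (∑ j, P m j * h j) - (∑ j, P m j * hstar j)
          = ∑ j, P m j * (h j - hstar j) := by
        rw [← Finset.sum_sub_distrib]
        exact Finset.sum_congr rfl fun j _ => by ring
      have : y m = (∑ j, P m j * hstar j) + n m := rfl
      rw [this, ← e2]; ring
    have swap : ∑ m, P m i * (∑ j, P m j * (h j - hstar j))
        = ∑ j, (∑ m, P m i * P m j) * (h j - hstar j) := by
      simp_rw [Finset.mul_sum, Finset.sum_mul]
      rw [Finset.sum_comm]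
      exact Finset.sum_congr rfl fun j _ => Finset.sum_congr rfl fun m _ => by ring
    have split : ∑ j, (∑ m, P m i * P m j) * (h j - hstar j)
        = (h i - hstar i) + ∑ j ∈ Finset.univ.erase i, (∑ m, P m i * P m j) * (h j - hstar j) := by
      rw [← Finset.add_sum_erase _ _ (Finset.mem_univ i), hcol i, one_mul]
    rw [hx, e1, swap, split]; ring
  -- bound |x - hstar i|
  have hb : |x - hstar i|
      ≤ μ1 * (∑ j ∈ (supp hstar).erase i, |h j - hstar j|) + CP * l1norm n := by
    rw [key]
    refine (abs_add_le _ _).trans (add_le_add ?_ ?_)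
    · rw [abs_neg]
      refine (Finset.abs_sum_le_sum_abs _ _).trans ?_
      have step1 : ∑ j ∈ Finset.univ.erase i, |(∑ m, P m i * P m j) * (h j - hstar j)|
          ≤ ∑ j ∈ Finset.univ.erase i, μ1 * |h j - hstar j| := by
        refine Finset.sum_le_sum fun j hj => ?_
        rw [abs_mul]
        exact mul_le_mul_of_nonneg_right (hμ1 i j (Finset.ne_of_mem_erase hj).symm) (abs_nonneg _)
      refine step1.trans ?_
      rw [← Finset.mul_sum]
      have hsub : (supp hstar).erase i ⊆ Finset.univ.erase i :=
        Finset.erase_subset_erase _ (Finset.subset_univ _)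
      have : ∑ j ∈ Finset.univ.erase i, |h j - hstar j|
          = ∑ j ∈ (supp hstar).erase i, |h j - hstar j| := by
        refine (Finset.sum_subset hsub fun j _ hjn => ?_).symm
        have hjs : hstar j = 0 := by
          by_contra hne
          exact hjn (Finset.mem_erase.mpr ⟨Finset.ne_of_mem_erase ‹j ∈ Finset.univ.erase i›,
            Finset.mem_filter.mpr ⟨Finset.mem_univ j, hne⟩⟩)
        rw [hjs, hvanish j hjs]; simp
      rw [this]
    · refine (Finset.abs_sum_le_sum_abs _ _).trans ?_
      rw [l1norm, Finset.mul_sum]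
      refine Finset.sum_le_sum fun m _ => ?_
      rw [abs_mul]
      exact mul_le_mul_of_nonneg_right (hCP m i) (abs_nonneg _)
  -- combine
  have tri : |listaAge P Λ θ y (l+1) i - hstar i| ≤ θ l + |x - hstar i| := by
    rw [hstep]
    calc |softThresh (θ l) x - hstar i|
        ≤ |softThresh (θ l) x - x| + |x - hstar i| := abs_sub_le _ x _
      _ ≤ θ l + |x - hstar i| := add_le_add_left (soft_close _ _ (hθ0 l)) _
  calc |listaAge P Λ θ y (l+1) i - hstar i|
      ≤ θ l + |x - hstar i| := tri
    _ ≤ θ l + (μ1 * (∑ j ∈ (supp hstar).erase i, |h j - hstar j|) + CP * l1norm n) :=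
        add_le_add_right hb _
    _ = μ1 * (∑ j ∈ (supp hstar).erase i, |h j - hstar j|) + θ l + CP * l1norm n := by ring
end
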